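/- ∫₀¹ K'(k)³ dk = 5·∫₀¹ k·K'(k)³ dk, where K' is the complementary complete elliptic integral of the first kind. -/

import Mathlib

/-! Write `k' = √(1 - k²)` and `k₁ = (1 - k') / (1 + k')` (descending Landen transformation).
Landen's identity `K(2√x / (1 + x)) = (1 + x) K(x)` at `x = k'` gives `K'(k₁) = (1 + k') K'(k)`.
The map `k ↦ k₁` is an increasing bijection of `[0, 1]` with `dk₁/dk = 2k / (k' (1 + k')²)`,
so substituting `t = k₁` in `∫₀¹ (1 - t) K'(t)³ dt` and using `1 - k₁ = 2k' / (1 + k')` turns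
it into `4 ∫₀¹ k K'(k)³ dk`. Everything converges because `K'(k) ≤ 4 k^(-1/2)`. -/

noncomputable def EllK (k : ℝ) : ℝ := ∫ u in (0:ℝ)..1, 1 / Real.sqrt ((1 - u^2) * (1 - k^2 * u^2))

noncomputable def EllK' (k : ℝ) : ℝ := EllK (Real.sqrt (1 - k^2))

open MeasureTheory Set Real

lemma EllK_eq_integral_Ioo (k : ℝ) :
    EllK k = ∫ u in Ioo 0 1, 1 / √((1 - u ^ 2) * (1 - k ^ 2 * u ^ 2)) := by
  rw [EllK, intervalIntegral.integral_of_le zero_le_one, integral_Ioc_eq_integral_Ioo]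

lemma EllK_nonneg (k : ℝ) : 0 ≤ EllK k := by
  rw [EllK_eq_integral_Ioo]
  exact setIntegral_nonneg measurableSet_Ioo fun u _ => by positivity

lemma EllK'_nonneg (k : ℝ) : 0 ≤ EllK' k := EllK_nonneg _

lemma stronglyMeasurable_EllK : StronglyMeasurable EllK := by
  simp_rw [funext EllK_eq_integral_Ioo]
  exact StronglyMeasurable.integral_prod_right (f := fun k u : ℝ => _)
    (Measurable.stronglyMeasurable (by fun_prop))

lemma quartic_pos {x u : ℝ} (hx : x ^ 2 < 1) (hu : u ^ 2 < 1) :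
    0 < (1 - u ^ 2) * (1 - x ^ 2 * u ^ 2) :=
  mul_pos (by linarith) (by nlinarith [mul_le_mul_of_nonneg_left hx.le (sq_nonneg u)])

lemma integral_Ioo_one_sub_rpow {r : ℝ} (hr : -1 < r) :
    ∫ u in Ioo (0 : ℝ) 1, (1 - u) ^ r = 1 / (r + 1) := by
  rw [← integral_Ioc_eq_integral_Ioo, ← intervalIntegral.integral_of_le zero_le_one,
    intervalIntegral.integral_comp_sub_left (fun u => u ^ r), integral_rpow (Or.inl hr)]
  simp [zero_rpow (by linarith : r + 1 ≠ 0)]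

lemma integrableOn_Ioo_one_sub_rpow {r : ℝ} (hr : -1 < r) :
    IntegrableOn (fun u : ℝ => (1 - u) ^ r) (Ioo 0 1) := by
  rw [← intervalIntegrable_iff_integrableOn_Ioo_of_le zero_le_one]
  simpa using (intervalIntegral.intervalIntegrable_rpow' hr (a := 1) (b := 0)).comp_sub_left 1

/-- Both factors of the quartic are at least `1 - u ^ 2`, and the second one is also at least
`1 - x ^ 2`; hence its square is at least `(1 - x ^ 2) (1 - u) ^ 3`. -/
lemma one_div_sqrt_quartic_le {x u : ℝ} (hx : x ^ 2 < 1) (hu : u ∈ Ioo (0 : ℝ) 1) :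
    1 / √((1 - u ^ 2) * (1 - x ^ 2 * u ^ 2)) ≤
      (1 - x ^ 2) ^ (-(1 / 4) : ℝ) * (1 - u) ^ (-(3 / 4) : ℝ) := by
  obtain ⟨hu0, hu1⟩ := hu
  have ha : 0 < 1 - u := by linarith
  have hc : 0 < 1 - x ^ 2 := by linarith
  have hA : 1 - u ≤ 1 - u ^ 2 := by nlinarith
  have hB : 1 - u ^ 2 ≤ 1 - x ^ 2 * u ^ 2 := by nlinarith
  have hB' : 1 - x ^ 2 ≤ 1 - x ^ 2 * u ^ 2 := by nlinarith
  have hP := quartic_pos hx (u := u) (by nlinarith)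
  have key : (1 - x ^ 2) * (1 - u) ^ 3 ≤ ((1 - u ^ 2) * (1 - x ^ 2 * u ^ 2)) ^ 2 := by
    have h1 : (1 - u) ^ 2 ≤ (1 - u ^ 2) * (1 - x ^ 2 * u ^ 2) := by nlinarith
    have h2 : (1 - x ^ 2) * (1 - u) ≤ (1 - u ^ 2) * (1 - x ^ 2 * u ^ 2) := by nlinarith
    nlinarith [mul_le_mul h1 h2 (by positivity) hP.le]
  calc 1 / √((1 - u ^ 2) * (1 - x ^ 2 * u ^ 2))
      = (((1 - u ^ 2) * (1 - x ^ 2 * u ^ 2)) ^ 2) ^ (-(1 / 4) : ℝ) := by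
        rw [← rpow_natCast_mul hP.le, sqrt_eq_rpow, one_div, ← rpow_neg hP.le]
        norm_num
    _ ≤ ((1 - x ^ 2) * (1 - u) ^ 3) ^ (-(1 / 4) : ℝ) :=
        rpow_le_rpow_of_nonpos (by positivity) key (by norm_num)
    _ = (1 - x ^ 2) ^ (-(1 / 4) : ℝ) * (1 - u) ^ (-(3 / 4) : ℝ) := by
        rw [mul_rpow hc.le (by positivity), ← rpow_natCast_mul ha.le]
        norm_num

lemma EllK_le_four_mul_rpow {x : ℝ} (hx : x ^ 2 < 1) :
    EllK x ≤ 4 * (1 - x ^ 2) ^ (-(1 / 4) : ℝ) := by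
  rw [EllK_eq_integral_Ioo]
  calc ∫ u in Ioo 0 1, 1 / √((1 - u ^ 2) * (1 - x ^ 2 * u ^ 2))
      ≤ ∫ u in Ioo 0 1, (1 - x ^ 2) ^ (-(1 / 4) : ℝ) * (1 - u) ^ (-(3 / 4) : ℝ) :=
        integral_mono_of_nonneg (ae_of_all _ fun u => by positivity)
          ((integrableOn_Ioo_one_sub_rpow (by norm_num)).const_mul _)
          ((ae_restrict_mem measurableSet_Ioo).mono fun u hu => one_div_sqrt_quartic_le hx hu)
    _ = 4 * (1 - x ^ 2) ^ (-(1 / 4) : ℝ) := by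
        rw [integral_const_mul, integral_Ioo_one_sub_rpow (by norm_num)]
        norm_num
        ring

lemma EllK'_le_four_mul_rpow {k : ℝ} (hk0 : 0 < k) (hk1 : k ≤ 1) :
    EllK' k ≤ 4 * k ^ (-(1 / 2) : ℝ) := by
  have hk2 : 0 ≤ 1 - k ^ 2 := by nlinarith
  have h := EllK_le_four_mul_rpow (x := √(1 - k ^ 2)) (by rw [sq_sqrt hk2]; nlinarith)
  rwa [sq_sqrt hk2, sub_sub_cancel, ← rpow_natCast_mul hk0.le,
    show ((2 : ℕ) : ℝ) * -(1 / 4) = -(1 / 2) by norm_num] at h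

lemma integrableOn_mul_EllK'_pow_three :
    IntegrableOn (fun k => k * EllK' k ^ 3) (Icc 0 1) := by
  rw [integrableOn_Icc_iff_integrableOn_Ioo]
  refine Integrable.mono' (((intervalIntegral.integrableOn_Ioo_rpow_iff zero_lt_one).2
    (by norm_num : (-1 : ℝ) < -(1 / 2))).const_mul 64) ?_ ?_
  · exact (measurable_id.mul ((stronglyMeasurable_EllK.measurable.comp
      (by fun_prop)).pow_const 3)).aestronglyMeasurable
  · refine (ae_restrict_mem measurableSet_Ioo).mono fun k ⟨hk0, hk1⟩ => ?_
    rw [norm_of_nonneg (by have := EllK'_nonneg k; positivity)]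
    calc k * EllK' k ^ 3 ≤ k * (4 * k ^ (-(1 / 2) : ℝ)) ^ 3 := by
          gcongr
          exacts [EllK'_nonneg k, EllK'_le_four_mul_rpow hk0 hk1.le]
      _ = 64 * k ^ (-(1 / 2) : ℝ) := by
        rw [mul_pow, ← rpow_mul_natCast hk0.le, mul_left_comm,
          ← rpow_one_add' hk0.le (by norm_num)]
        norm_num

lemma landen_quartic_eq {x : ℝ} (hx : 0 ≤ x) (u : ℝ) :
    (1 - ((1 + x) * u / (1 + x * u ^ 2)) ^ 2) *
        (1 - (2 * √x / (1 + x)) ^ 2 * ((1 + x) * u / (1 + x * u ^ 2)) ^ 2) =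
      (1 - u ^ 2) * (1 - x ^ 2 * u ^ 2) * ((1 - x * u ^ 2) / (1 + x * u ^ 2) ^ 2) ^ 2 := by
  have h1 : 0 < 1 + x := by linarith
  have h2 : 0 < 1 + x * u ^ 2 := by positivity
  rw [div_pow (2 * √x), mul_pow, sq_sqrt hx]
  field_simp
  ring

/-- Substitute `v = (1 + x) u / (1 + x u²)`, an increasing bijection of `[0, 1]`. -/
lemma EllK_landen {x : ℝ} (hx0 : 0 ≤ x) (hx1 : x < 1) :
    EllK (2 * √x / (1 + x)) = (1 + x) * EllK x := by
  have hden (u : ℝ) : 0 < 1 + x * u ^ 2 := by positivity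
  have hderiv : ∀ u ∈ Ioo (0 : ℝ) 1, HasDerivAt (fun u => (1 + x) * u / (1 + x * u ^ 2))
      ((1 + x) * (1 - x * u ^ 2) / (1 + x * u ^ 2) ^ 2) u := by
    intro u _
    refine (((hasDerivAt_id u).const_mul (1 + x)).div
      (((hasDerivAt_pow 2 u).const_mul x).const_add 1) (hden u).ne').congr_deriv ?_
    simp only [id]
    ring
  have hcont : ContinuousOn (fun u => (1 + x) * u / (1 + x * u ^ 2)) (Icc 0 1) :=
    (by fun_prop : Continuous _).continuousOn.div (by fun_prop) fun u _ => (hden u).ne'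
  have hderiv_nonneg : ∀ u ∈ Ioo (0 : ℝ) 1,
      0 ≤ (1 + x) * (1 - x * u ^ 2) / (1 + x * u ^ 2) ^ 2 := by
    rintro u ⟨hu0, hu1⟩
    have : 0 ≤ 1 - x * u ^ 2 := by nlinarith
    positivity
  have hsubst := integral_Icc_deriv_smul_of_deriv_nonneg hcont hderiv hderiv_nonneg zero_le_one
    (g := fun v => 1 / √((1 - v ^ 2) * (1 - (2 * √x / (1 + x)) ^ 2 * v ^ 2)))
  have h1 : (1 + x) * 1 / (1 + x * 1 ^ 2) = 1 := by field_simp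
  simp only [mul_zero, zero_div, h1] at hsubst
  rw [EllK_eq_integral_Ioo, EllK_eq_integral_Ioo, ← integral_Icc_eq_integral_Ioo, ← hsubst,
    integral_Icc_eq_integral_Ioo, ← integral_const_mul]
  refine setIntegral_congr_fun measurableSet_Ioo fun u ⟨hu0, hu1⟩ => ?_
  have hP := quartic_pos (x := x) (u := u) (by nlinarith) (by nlinarith)
  have hq : 0 < 1 - x * u ^ 2 := by nlinarith
  rw [smul_eq_mul, landen_quartic_eq hx0, sqrt_mul hP.le, sqrt_sq (by positivity)]
  field_simp

noncomputable def landenMap (k : ℝ) : ℝ := (1 - √(1 - k ^ 2)) / (1 + √(1 - k ^ 2))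

lemma landenMap_zero : landenMap 0 = 0 := by simp [landenMap]

lemma landenMap_one : landenMap 1 = 1 := by simp [landenMap]

lemma EllK'_landenMap {k : ℝ} (hk : k ≠ 0) :
    EllK' (landenMap k) = (1 + √(1 - k ^ 2)) * EllK' k := by
  set s := √(1 - k ^ 2)
  have hs0 : 0 ≤ s := sqrt_nonneg _
  have hs1 : s < 1 := by
    rw [sqrt_lt' one_pos]
    have : 0 < k ^ 2 := by positivity
    linarith
  have hcompl : 1 - landenMap k ^ 2 = (2 * √s / (1 + s)) ^ 2 := by
    rw [landenMap, div_pow (2 * √s), mul_pow, sq_sqrt hs0]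
    field_simp
    ring
  rw [EllK', hcompl, sqrt_sq (by positivity), EllK_landen hs0 hs1, EllK']

lemma continuousOn_landenMap : ContinuousOn landenMap (Icc 0 1) :=
  ContinuousOn.div (by fun_prop) (by fun_prop) fun k _ => by positivity

lemma hasDerivAt_landenMap {k : ℝ} (hk : k ∈ Ioo (0 : ℝ) 1) :
    HasDerivAt landenMap (2 * k / (√(1 - k ^ 2) * (1 + √(1 - k ^ 2)) ^ 2)) k := by
  have hs : 0 < √(1 - k ^ 2) := sqrt_pos.2 (by nlinarith [hk.1, hk.2])
  have hsqrt : HasDerivAt (fun k => √(1 - k ^ 2)) (-(2 * k) / (2 * √(1 - k ^ 2))) k := by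
    simpa using ((hasDerivAt_pow 2 k).const_sub 1).sqrt (sqrt_pos.1 hs).ne'
  refine ((hsqrt.const_sub 1).div (hsqrt.const_add 1) (by positivity)).congr_deriv ?_
  field_simp
  ring

lemma integral_Icc_landenMap (g : ℝ → ℝ) :
    ∫ k in Icc 0 1, 2 * k / (√(1 - k ^ 2) * (1 + √(1 - k ^ 2)) ^ 2) * g (landenMap k) =
      ∫ t in Icc 0 1, g t := by
  simpa [landenMap_zero, landenMap_one] using integral_Icc_deriv_smul_of_deriv_nonneg
    continuousOn_landenMap (fun k hk => hasDerivAt_landenMap hk)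
    (fun k hk => by have := hk.1; positivity) zero_le_one (g := g)

lemma integrableOn_Icc_landenMap_iff (g : ℝ → ℝ) :
    IntegrableOn (fun k => 2 * k / (√(1 - k ^ 2) * (1 + √(1 - k ^ 2)) ^ 2) * g (landenMap k))
      (Icc 0 1) ↔ IntegrableOn g (Icc 0 1) := by
  simpa [landenMap_zero, landenMap_one] using integrableOn_Icc_deriv_smul_iff_of_deriv_nonneg
    continuousOn_landenMap (fun k hk => hasDerivAt_landenMap hk)
    (fun k hk => by have := hk.1; positivity) zero_le_one (g := g)

lemma jacobian_mul_one_sub_landenMap_mul_EllK'_pow_three {k : ℝ} (hk : k ∈ Ioo (0 : ℝ) 1) :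
    2 * k / (√(1 - k ^ 2) * (1 + √(1 - k ^ 2)) ^ 2) * (1 - landenMap k) *
      EllK' (landenMap k) ^ 3 = 4 * (k * EllK' k ^ 3) := by
  have hs : 0 < √(1 - k ^ 2) := sqrt_pos.2 (by nlinarith [hk.1, hk.2])
  rw [EllK'_landenMap hk.1.ne', landenMap]
  field_simp
  ring

theorem stmt2 :
    ∫ k in (0:ℝ)..1, (EllK' k)^3 = 5 * ∫ k in (0:ℝ)..1, k * (EllK' k)^3 := by
  have hf := integrableOn_mul_EllK'_pow_three
  have hg := (integrableOn_Icc_landenMap_iff fun t => t * EllK' t ^ 3).2 hf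
  simp only [intervalIntegral.integral_of_le zero_le_one, ← integral_Icc_eq_integral_Ioc]
  calc ∫ t in Icc 0 1, EllK' t ^ 3
      = ∫ k in Icc 0 1, 2 * k / (√(1 - k ^ 2) * (1 + √(1 - k ^ 2)) ^ 2) *
          EllK' (landenMap k) ^ 3 := (integral_Icc_landenMap _).symm
    _ = ∫ k in Icc 0 1, (2 * k / (√(1 - k ^ 2) * (1 + √(1 - k ^ 2)) ^ 2) *
          (landenMap k * EllK' (landenMap k) ^ 3) + 4 * (k * EllK' k ^ 3)) := by
        simp only [integral_Icc_eq_integral_Ioo]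
        refine setIntegral_congr_fun measurableSet_Ioo fun k hk => ?_
        linear_combination jacobian_mul_one_sub_landenMap_mul_EllK'_pow_three hk
    _ = 5 * ∫ t in Icc 0 1, t * EllK' t ^ 3 := by
        rw [integral_add hg (hf.const_mul 4), integral_const_mul,
          integral_Icc_landenMap fun t => t * EllK' t ^ 3]
        ring
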